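/- arXiv:1604.01969 — 3 statements merged into one kernel-verified Lean document; each statement's English description precedes it below -/
import Mathlib

section
/- Let a ∈ S_n^+ be a positive-semidefinite n×n matrix partitioned into blocks a_{ij} = e_i a e_j' (i,j = 1,2) with a_{11} of rank k > 0 and reduced eigen-decomposition a_{11} = u λ u'. Define σ_{i1} = a_{i1} u λ^{-1/2}, α = a_{22} − σ_{21}σ_{21}', σ = [[σ_{11}, 0],[σ_{21}, I_{n_2}]], and a^W = diag(I_k, α). Then α is positive-semidefinite and a = σ a^W σ'. -/
/-!
Write `a₁₁ = σ₁₁ σ₁₁ᵀ` with `σ₁₁ = u λ^{1/2}`, which has the left inverse `L = λ^{-1/2} uᵀ`.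
Positive semidefiniteness of `a` gives `ker a₁₁ ⊆ ker a₂₁`, and `1 - Lᵀ σ₁₁ᵀ` maps into
`ker a₁₁`, so `a₂₁ = a₂₁ Lᵀ σ₁₁ᵀ = σ₂₁ σ₁₁ᵀ`. With these two block identities the factorization
`a = σ a^W σᵀ` is a formal identity, and since `σ` has the left inverse
`τ = [[L, 0], [-σ₂₁ L, 1]]`, the matrix `a^W = τ a τᵀ`, hence its corner `α`, is positive
semidefinite.
-/

open Matrix

open scoped ComplexOrder

namespace Matrix

theorem diagonal_mul_diagonal_inv {n K : Type*} [Fintype n] [DecidableEq n] [DivisionRing K]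
    {d : n → K} (hd : ∀ i, d i ≠ 0) : diagonal d * diagonal (fun i => (d i)⁻¹) = 1 := by
  rw [diagonal_mul_diagonal, ← diagonal_one]
  exact congrArg diagonal (funext fun i => mul_inv_cancel₀ (hd i))

section Blocks

variable {m n k R : Type*} [Fintype n] [Fintype k] [DecidableEq n] [DecidableEq k]

theorem fromBlocks_eq_mul_fromBlocks_one_mul_conjTranspose [Ring R] [StarRing R]
    (σ₁ : Matrix m k R) (σ₂ : Matrix n k R) (D : Matrix n n R) :
    fromBlocks (σ₁ * σ₁ᴴ) (σ₁ * σ₂ᴴ) (σ₂ * σ₁ᴴ) D =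
      fromBlocks σ₁ 0 σ₂ (1 : Matrix n n R) * fromBlocks (1 : Matrix k k R) 0 0 (D - σ₂ * σ₂ᴴ) *
        (fromBlocks σ₁ 0 σ₂ (1 : Matrix n n R))ᴴ := by
  simp [fromBlocks_conjTranspose, fromBlocks_multiply]

theorem fromBlocks_mul_fromBlocks_zero₁₂_eq_one [Fintype m] [Ring R] {σ₁ : Matrix m k R}
    {L : Matrix k m R} (hL : L * σ₁ = 1) (σ₂ : Matrix n k R) :
    fromBlocks L 0 (-(σ₂ * L)) (1 : Matrix n n R) * fromBlocks σ₁ 0 σ₂ (1 : Matrix n n R) = 1 := by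
  simp [fromBlocks_multiply, Matrix.mul_assoc, hL, fromBlocks_one]

end Blocks

theorem PosSemidef.of_eq_mul_mul_conjTranspose {m n R : Type*} [Fintype m] [Fintype n]
    [DecidableEq m] [Ring R] [PartialOrder R] [StarRing R] {a : Matrix n n R} {b : Matrix m m R}
    {s : Matrix n m R} {t : Matrix m n R} (ha : a.PosSemidef) (hab : a = s * b * sᴴ)
    (hts : t * s = 1) : b.PosSemidef := by
  have hb : b = t * a * tᴴ := by
    rw [hab, ← Matrix.mul_assoc, ← Matrix.mul_assoc, hts, Matrix.one_mul, Matrix.mul_assoc,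
      ← conjTranspose_mul, hts, conjTranspose_one, Matrix.mul_one]
  exact hb ▸ ha.mul_mul_conjTranspose_same t

section PosSemidef

variable {m n k 𝕜 : Type*} [Fintype m] [Fintype n] [RCLike 𝕜]
  {a : Matrix (m ⊕ n) (m ⊕ n) 𝕜}

theorem PosSemidef.toBlocks₂₁_mulVec_eq_zero (ha : a.PosSemidef) {x : m → 𝕜}
    (hx : a.toBlocks₁₁ *ᵥ x = 0) : a.toBlocks₂₁ *ᵥ x = 0 := by
  have hax : a *ᵥ Sum.elim x 0 = Sum.elim (0 : m → 𝕜) (a.toBlocks₂₁ *ᵥ x) := by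
    conv_lhs => rw [← fromBlocks_toBlocks a]
    simp [fromBlocks_mulVec, hx]
  have h0 : a *ᵥ Sum.elim x 0 = 0 :=
    (ha.dotProduct_mulVec_zero_iff _).1 (by simp [hax, dotProduct, Fintype.sum_sum_type])
  simpa [hax] using congrArg (· ∘ Sum.inr) h0

theorem PosSemidef.toBlocks₂₁_mul_eq_zero (ha : a.PosSemidef) {p : Type*} {X : Matrix m p 𝕜}
    (hX : a.toBlocks₁₁ * X = 0) : a.toBlocks₂₁ * X = 0 := by
  ext i j
  have hcol := ha.toBlocks₂₁_mulVec_eq_zero (x := fun l => X l j) (funext fun l => by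
    simpa [mul_apply, mulVec, dotProduct] using congrFun₂ hX l j)
  simpa [mul_apply, mulVec, dotProduct] using congrFun hcol i

variable [Fintype k] [DecidableEq m] [DecidableEq k]

theorem PosSemidef.toBlocks₂₁_eq_mul_conjTranspose (ha : a.PosSemidef) {σ₁ : Matrix m k 𝕜}
    {L : Matrix k m 𝕜} (hL : L * σ₁ = 1) (h11 : a.toBlocks₁₁ = σ₁ * σ₁ᴴ) :
    a.toBlocks₂₁ = a.toBlocks₂₁ * Lᴴ * σ₁ᴴ := by
  have hker : a.toBlocks₁₁ * (1 - Lᴴ * σ₁ᴴ) = 0 := by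
    rw [h11, Matrix.mul_sub, Matrix.mul_one, Matrix.mul_assoc, ← Matrix.mul_assoc σ₁ᴴ,
      ← conjTranspose_mul, hL, conjTranspose_one, Matrix.one_mul, sub_self]
  have h21 := ha.toBlocks₂₁_mul_eq_zero hker
  rwa [Matrix.mul_sub, Matrix.mul_one, sub_eq_zero, ← Matrix.mul_assoc] at h21

theorem PosSemidef.eq_fromBlocks_mul_mul_conjTranspose [DecidableEq n] (ha : a.PosSemidef)
    {σ₁ : Matrix m k 𝕜} {L : Matrix k m 𝕜} (hL : L * σ₁ = 1) (h11 : a.toBlocks₁₁ = σ₁ * σ₁ᴴ)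
    {σ₂ : Matrix n k 𝕜} (hσ₂ : σ₂ = a.toBlocks₂₁ * Lᴴ) :
    (a.toBlocks₂₂ - σ₂ * σ₂ᴴ).PosSemidef ∧
      a = fromBlocks σ₁ 0 σ₂ (1 : Matrix n n 𝕜) *
          fromBlocks (1 : Matrix k k 𝕜) 0 0 (a.toBlocks₂₂ - σ₂ * σ₂ᴴ) *
          (fromBlocks σ₁ 0 σ₂ (1 : Matrix n n 𝕜))ᴴ := by
  have h21 : a.toBlocks₂₁ = σ₂ * σ₁ᴴ := hσ₂ ▸ ha.toBlocks₂₁_eq_mul_conjTranspose hL h11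
  have h12 : a.toBlocks₁₂ = σ₁ * σ₂ᴴ := by
    rw [← conjTranspose_conjTranspose σ₁, ← conjTranspose_mul, ← h21]
    conv_lhs => rw [← ha.isHermitian.eq]
    rfl
  have hfact := fromBlocks_eq_mul_fromBlocks_one_mul_conjTranspose σ₁ σ₂ a.toBlocks₂₂
  rw [← h11, ← h12, ← h21, fromBlocks_toBlocks] at hfact
  exact ⟨(ha.of_eq_mul_mul_conjTranspose hfact
    (fromBlocks_mul_fromBlocks_zero₁₂_eq_one hL σ₂)).submatrix Sum.inr, hfact⟩

end PosSemidef

end Matrix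

theorem posSemidef_block_factorization_general
    {n1 n2 k : ℕ}
    (a : Matrix (Fin n1 ⊕ Fin n2) (Fin n1 ⊕ Fin n2) ℝ) (ha : a.PosSemidef)
    (u : Matrix (Fin n1) (Fin k) ℝ) (d : Fin k → ℝ)
    (hd : ∀ i, 0 < d i) (hu : uᵀ * u = 1)
    (ha11 : a.toBlocks₁₁ = u * Matrix.diagonal d * uᵀ) :
    letI lih : Matrix (Fin k) (Fin k) ℝ := Matrix.diagonal fun i => (Real.sqrt (d i))⁻¹
    letI σ11 := a.toBlocks₁₁ * u * lih
    letI σ21 := a.toBlocks₂₁ * u * lih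
    letI α := a.toBlocks₂₂ - σ21 * σ21ᵀ
    α.PosSemidef ∧
      a = (Matrix.fromBlocks σ11 0 σ21 (1 : Matrix (Fin n2) (Fin n2) ℝ)) *
            (Matrix.fromBlocks (1 : Matrix (Fin k) (Fin k) ℝ) 0 0 α) *
            (Matrix.fromBlocks σ11 0 σ21 (1 : Matrix (Fin n2) (Fin n2) ℝ))ᵀ := by
  set lih : Matrix (Fin k) (Fin k) ℝ := diagonal fun i => (√(d i))⁻¹
  set s : Matrix (Fin k) (Fin k) ℝ := diagonal fun i => √(d i)
  have hsqrt : ∀ i, √(d i) ≠ 0 := fun i => (Real.sqrt_pos.2 (hd i)).ne'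
  have hss : s * s = diagonal d := by
    rw [diagonal_mul_diagonal]
    exact congrArg diagonal (funext fun i => Real.mul_self_sqrt (hd i).le)
  have hsl : s * lih = 1 := diagonal_mul_diagonal_inv hsqrt
  have hls : lih * s = 1 := by
    simpa [s, lih] using diagonal_mul_diagonal_inv (fun i => inv_ne_zero (hsqrt i))
  have hσ11 : a.toBlocks₁₁ * u * lih = u * s := by
    rw [ha11, ← hss]
    simp only [Matrix.mul_assoc]
    rw [← Matrix.mul_assoc uᵀ u, hu, Matrix.one_mul, hsl, Matrix.mul_one]
  have hL : lih * uᵀ * (u * s) = 1 := by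
    rw [Matrix.mul_assoc, ← Matrix.mul_assoc uᵀ, hu, Matrix.one_mul, hls]
  have h11 : a.toBlocks₁₁ = u * s * (u * s)ᵀ := by
    rw [ha11, ← hss, transpose_mul, diagonal_transpose]
    simp only [Matrix.mul_assoc]
    rfl
  have hσ21 : a.toBlocks₂₁ * u * lih = a.toBlocks₂₁ * (lih * uᵀ)ᵀ := by
    rw [transpose_mul, transpose_transpose, diagonal_transpose, Matrix.mul_assoc]
  simp only [← conjTranspose_eq_transpose_of_trivial] at hL h11 hσ21 ⊢
  rw [hσ11]
  exact ha.eq_fromBlocks_mul_mul_conjTranspose hL h11 hσ21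

/-- Block factorization of a positive-semidefinite matrix: with
`a₁₁ = u (diagonal d) uᵀ` the reduced eigen-decomposition (rank `k > 0`),
`σᵢ₁ = aᵢ₁ u λ^{-1/2}`, `α = a₂₂ − σ₂₁σ₂₁ᵀ`, `σ = [[σ₁₁,0],[σ₂₁,I]]` and
`a^W = diag(I_k, α)`, the matrix `α` is positive semidefinite and
`a = σ a^W σᵀ`. -/
theorem posSemidef_block_factorization
    {n1 n2 k : ℕ} (hk : 0 < k)
    (a : Matrix (Fin n1 ⊕ Fin n2) (Fin n1 ⊕ Fin n2) ℝ) (ha : a.PosSemidef)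
    (u : Matrix (Fin n1) (Fin k) ℝ) (d : Fin k → ℝ)
    (hd : ∀ i, 0 < d i) (hu : uᵀ * u = 1)
    (ha11 : a.toBlocks₁₁ = u * Matrix.diagonal d * uᵀ)
    (hrank : (a.toBlocks₁₁).rank = k) :
    letI lih : Matrix (Fin k) (Fin k) ℝ := Matrix.diagonal fun i => (Real.sqrt (d i))⁻¹
    letI σ11 := a.toBlocks₁₁ * u * lih
    letI σ21 := a.toBlocks₂₁ * u * lih
    letI α := a.toBlocks₂₂ - σ21 * σ21ᵀ
    α.PosSemidef ∧
      a = (Matrix.fromBlocks σ11 0 σ21 (1 : Matrix (Fin n2) (Fin n2) ℝ)) *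
            (Matrix.fromBlocks (1 : Matrix (Fin k) (Fin k) ℝ) 0 0 α) *
            (Matrix.fromBlocks σ11 0 σ21 (1 : Matrix (Fin n2) (Fin n2) ℝ))ᵀ :=
  posSemidef_block_factorization_general a ha u d hd hu ha11
end

section
/- With a, σ, a^W as in the block factorization a = σ a^W σ' (where σ_{11} = u λ^{1/2} has full column rank), one has σ(σ'σ)^{-1}σ' a = a. -/
open Matrix

/-- With `a`, `σ`, `a^W` as in the block factorization `a = σ a^W σᵀ`
(where `σ₁₁ = u λ^{1/2}` has full column rank), one has
`σ (σᵀσ)⁻¹ σᵀ a = a`. -/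
theorem sigma_pseudoinverse_absorbs
    {n1 n2 k : ℕ} (hk : 0 < k)
    (a : Matrix (Fin n1 ⊕ Fin n2) (Fin n1 ⊕ Fin n2) ℝ) (ha : a.PosSemidef)
    (u : Matrix (Fin n1) (Fin k) ℝ) (d : Fin k → ℝ)
    (hd : ∀ i, 0 < d i) (hu : uᵀ * u = 1)
    (ha11 : a.toBlocks₁₁ = u * Matrix.diagonal d * uᵀ)
    (hrank : (a.toBlocks₁₁).rank = k) :
    letI lih : Matrix (Fin k) (Fin k) ℝ := Matrix.diagonal fun i => (Real.sqrt (d i))⁻¹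
    letI σ11 := a.toBlocks₁₁ * u * lih
    letI σ21 := a.toBlocks₂₁ * u * lih
    letI σ : Matrix (Fin n1 ⊕ Fin n2) (Fin k ⊕ Fin n2) ℝ := Matrix.fromBlocks σ11 0 σ21 1
    σ * (σᵀ * σ)⁻¹ * σᵀ * a = a := by
  set lih : Matrix (Fin k) (Fin k) ℝ := Matrix.diagonal fun i => (Real.sqrt (d i))⁻¹
    with hlihdef
  set σ11 := a.toBlocks₁₁ * u * lih with hσ11def
  set σ21 := a.toBlocks₂₁ * u * lih with hσ21def
  set σ : Matrix (Fin n1 ⊕ Fin n2) (Fin k ⊕ Fin n2) ℝ := Matrix.fromBlocks σ11 0 σ21 1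
    with hσdef
  have hsqrt_ne : ∀ i, Real.sqrt (d i) ≠ 0 := fun i => (Real.sqrt_pos.mpr (hd i)).ne'
  set D : Matrix (Fin k) (Fin k) ℝ := Matrix.diagonal fun i => Real.sqrt (d i) with hDdef
  have hDlih : D * lih = 1 := by
    rw [hDdef, hlihdef, diagonal_mul_diagonal,
      show (fun i => Real.sqrt (d i) * (Real.sqrt (d i))⁻¹) = fun _ : Fin k => (1 : ℝ) from
        funext fun i => mul_inv_cancel₀ (hsqrt_ne i), Matrix.diagonal_one]
  have hlihD : lih * D = 1 := by
    rw [hlihdef, hDdef, diagonal_mul_diagonal,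
      show (fun i => (Real.sqrt (d i))⁻¹ * Real.sqrt (d i)) = fun _ : Fin k => (1 : ℝ) from
        funext fun i => inv_mul_cancel₀ (hsqrt_ne i), Matrix.diagonal_one]
  have hDD : D * D = Matrix.diagonal d := by
    rw [hDdef, diagonal_mul_diagonal,
      show (fun i => Real.sqrt (d i) * Real.sqrt (d i)) = d from
        funext fun i => Real.mul_self_sqrt (hd i).le]
  have hDT : Dᵀ = D := by rw [hDdef, Matrix.diagonal_transpose]
  have hσ11 : σ11 = u * D := by
    rw [hσ11def, ha11, Matrix.mul_assoc (u * Matrix.diagonal d) uᵀ u, hu, Matrix.mul_one,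
      ← hDD, Matrix.mul_assoc u (D * D) lih, Matrix.mul_assoc D D lih, hDlih,
      Matrix.mul_one]
  -- a11 absorbs the projection u uᵀ
  have hA11P : a.toBlocks₁₁ * (u * uᵀ) = a.toBlocks₁₁ := by
    rw [ha11, Matrix.mul_assoc (u * Matrix.diagonal d) uᵀ (u * uᵀ),
      ← Matrix.mul_assoc uᵀ u uᵀ, hu, Matrix.one_mul]
  -- kernel inclusion from positive semidefiniteness
  have hker : ∀ x : Fin n1 → ℝ, a.toBlocks₁₁ *ᵥ x = 0 → a.toBlocks₂₁ *ᵥ x = 0 := by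
    intro x hx
    have hav : a *ᵥ Sum.elim x 0 = Sum.elim (a.toBlocks₁₁ *ᵥ x) (a.toBlocks₂₁ *ᵥ x) := by
      conv_lhs => rw [← Matrix.fromBlocks_toBlocks a]
      rw [Matrix.fromBlocks_mulVec]
      simp
    have h0 : star (Sum.elim x (0 : Fin n2 → ℝ)) ⬝ᵥ a *ᵥ Sum.elim x 0 = 0 := by
      rw [hav, hx]
      simp [sumElim_dotProduct_sumElim]
    have h1 := (ha.dotProduct_mulVec_zero_iff _).mp h0
    rw [hav] at h1
    funext i
    exact congrFun h1 (Sum.inr i)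
  -- a21 absorbs the projection u uᵀ
  have hPabsorb : a.toBlocks₂₁ * (u * uᵀ) = a.toBlocks₂₁ := by
    have key : ∀ x, (a.toBlocks₂₁ * (u * uᵀ)) *ᵥ x = a.toBlocks₂₁ *ᵥ x := by
      intro x
      have h1 : a.toBlocks₁₁ *ᵥ ((u * uᵀ) *ᵥ x - x) = 0 := by
        rw [Matrix.mulVec_sub, Matrix.mulVec_mulVec, hA11P, sub_self]
      have h2 := hker _ h1
      rw [Matrix.mulVec_sub, Matrix.mulVec_mulVec, sub_eq_zero] at h2
      exact h2
    ext i j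
    have := congrFun (key (Pi.single j 1)) i
    simpa using this
  -- symmetry
  have hsym : a.toBlocks₁₂ = a.toBlocks₂₁ᵀ := by
    ext i j
    have := congrFun (congrFun ha.isHermitian (Sum.inl i)) (Sum.inr j)
    simpa [Matrix.toBlocks₁₂, Matrix.toBlocks₂₁, Matrix.conjTranspose_apply] using this.symm
  -- block identities
  have h1 : σ11 * σ11ᵀ = a.toBlocks₁₁ := by
    rw [hσ11, Matrix.transpose_mul, hDT, Matrix.mul_assoc, ← Matrix.mul_assoc D D uᵀ, hDD,
      ← Matrix.mul_assoc, ha11]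
  have h2 : σ21 * σ11ᵀ = a.toBlocks₂₁ := by
    rw [hσ21def, hσ11, Matrix.transpose_mul, hDT, Matrix.mul_assoc (a.toBlocks₂₁ * u) lih (D * uᵀ),
      ← Matrix.mul_assoc lih D uᵀ, hlihD, Matrix.one_mul, Matrix.mul_assoc, hPabsorb]
  have h3 : σ11 * σ21ᵀ = a.toBlocks₁₂ := by
    have h2t := congrArg Matrix.transpose h2
    rw [Matrix.transpose_mul, Matrix.transpose_transpose] at h2t
    rw [hsym]
    exact h2t
  -- the factorization a = σ W σᵀ
  set W : Matrix (Fin k ⊕ Fin n2) (Fin k ⊕ Fin n2) ℝ :=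
    Matrix.fromBlocks 1 0 0 (a.toBlocks₂₂ - σ21 * σ21ᵀ) with hWdef
  have hfact : σ * W * σᵀ = a := by
    rw [hσdef, hWdef, Matrix.fromBlocks_transpose, Matrix.fromBlocks_multiply,
      Matrix.fromBlocks_multiply]
    conv_rhs => rw [← Matrix.fromBlocks_toBlocks a]
    simp [h1, h2, h3, Matrix.mul_assoc]
  -- injectivity of σ
  have hinjσ : ∀ v : Fin k ⊕ Fin n2 → ℝ, σ *ᵥ v = 0 → v = 0 := by
    intro v hv
    have hveq : v = Sum.elim (v ∘ Sum.inl) (v ∘ Sum.inr) := by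
      funext i; cases i <;> rfl
    rw [hveq, hσdef, Matrix.fromBlocks_mulVec] at hv
    have hv1 : σ11 *ᵥ (v ∘ Sum.inl) = 0 := by
      funext i
      have := congrFun hv (Sum.inl i)
      simpa using this
    have hx1 : v ∘ Sum.inl = 0 := by
      have hD1 : D *ᵥ (v ∘ Sum.inl) = 0 := by
        have h2' : uᵀ *ᵥ (σ11 *ᵥ (v ∘ Sum.inl)) = 0 := by rw [hv1, Matrix.mulVec_zero]
        rw [hσ11, ← Matrix.mulVec_mulVec (v ∘ Sum.inl) u D,
          Matrix.mulVec_mulVec (D *ᵥ (v ∘ Sum.inl)) uᵀ u, hu, Matrix.one_mulVec] at h2'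
        exact h2'
      have := congrArg (fun y => lih *ᵥ y) hD1
      simpa [Matrix.mulVec_mulVec, hlihD, Matrix.one_mulVec] using this
    have hx2 : v ∘ Sum.inr = 0 := by
      funext i
      have := congrFun hv (Sum.inr i)
      simpa [hx1] using this
    rw [hveq, hx1, hx2]
    funext i; cases i <;> rfl
  -- σᵀ σ is invertible
  have hIsUnit : IsUnit (σᵀ * σ) := by
    rw [← Matrix.mulVec_injective_iff_isUnit]
    intro v w hvw
    have hsub : (σᵀ * σ) *ᵥ (v - w) = 0 := by
      rw [Matrix.mulVec_sub, hvw, sub_self]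
    have hdot : (σ *ᵥ (v - w)) ⬝ᵥ (σ *ᵥ (v - w)) = 0 := by
      have h0 : (v - w) ⬝ᵥ ((σᵀ * σ) *ᵥ (v - w)) = 0 := by
        rw [hsub, dotProduct_zero]
      rw [← Matrix.mulVec_mulVec, Matrix.dotProduct_mulVec, Matrix.vecMul_transpose] at h0
      exact h0
    have hz := dotProduct_self_eq_zero.mp hdot
    exact sub_eq_zero.mp (hinjσ _ hz)
  have hdet : IsUnit (σᵀ * σ).det := (Matrix.isUnit_iff_isUnit_det _).mp hIsUnit
  calc σ * (σᵀ * σ)⁻¹ * σᵀ * a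
      = σ * (σᵀ * σ)⁻¹ * σᵀ * (σ * W * σᵀ) := by rw [hfact]
    _ = σ * ((σᵀ * σ)⁻¹ * (σᵀ * σ)) * (W * σᵀ) := by simp only [Matrix.mul_assoc]
    _ = σ * W * σᵀ := by rw [Matrix.nonsing_inv_mul _ hdet, Matrix.mul_one, Matrix.mul_assoc]
    _ = a := hfact
end

section
/- Let v ∈ S_n^+ be partitioned into blocks with v_{11} of rank l > 0 and reduced eigen-decomposition v_{11} = u_0 λ_0 u_0'. Define ψ_{i1} = v_{i1} u_0 λ_0^{-1/2}, φ = v_{22} − ψ_{21}ψ_{21}', ψ = [[ψ_{11},0],[ψ_{21},I_{n_2}]]. If X is an R^n-valued Gaussian random vector with distribution N(μ,v) and Ξ = (ψ'ψ)^{-1}ψ'(X−μ), then E‖X − μ − ψΞ‖² = 0 and Ξ has distribution N(0, diag(I_l, φ)). -/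
open MeasureTheory ProbabilityTheory Matrix

noncomputable section

/-- A measure `ν` on `ι → ℝ` is the multivariate Gaussian `N(m, v)` iff every
linear functional pushes it forward to the corresponding one-dimensional Gaussian. -/
def IsGaussianVec {ι : Type*} [Fintype ι] (ν : Measure (ι → ℝ))
    (m : ι → ℝ) (v : Matrix ι ι ℝ) : Prop :=
  ∀ l : ι → ℝ,
    ν.map (fun x => ∑ i, l i * x i) =
      gaussianReal (∑ i, l i * m i)
        (Real.toNNReal (∑ i, ∑ j, l i * v i j * l j))

end

/-! The covariance factors as `v = ψ diag(I, φ) ψᵀ`. Positive semidefiniteness forces `v₂₁` to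
vanish on `ker v₁₁`, so `v₂₁ u₀ u₀ᵀ = v₂₁`; together with `ψ₁₁ = u₀ λ₀^{1/2}` this gives the four
blocks. The Schur complement of the identity block of `ψᵀψ` is `λ₀`, so `ψᵀψ` is invertible and
`M = (ψᵀψ)⁻¹ψᵀ` is a left inverse of `ψ`. Hence `Ξ = M(X - μ)` is Gaussian with covariance
`M v Mᵀ = diag(I, φ)`, and the residual `(1 - ψM)(X - μ)` is Gaussian with covariance
`((1 - ψM)ψ) diag(I, φ) ((1 - ψM)ψ)ᵀ = 0`, so it vanishes almost surely. -/

section GaussianVec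

variable {ι κ : Type*} [Fintype ι] [Fintype κ]

lemma isGaussianVec_iff_dotProduct {ν : Measure (ι → ℝ)} {m : ι → ℝ} {v : Matrix ι ι ℝ} :
    IsGaussianVec ν m v ↔
      ∀ l : ι → ℝ, ν.map (l ⬝ᵥ ·) = gaussianReal (l ⬝ᵥ m) (l ⬝ᵥ v *ᵥ l).toNNReal := by
  have hquad : ∀ l : ι → ℝ, ∑ i, ∑ j, l i * v i j * l j = l ⬝ᵥ v *ᵥ l := fun l => by
    simp [dotProduct, mulVec, Finset.mul_sum, mul_assoc]
  simp only [IsGaussianVec, hquad]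
  rfl

lemma IsGaussianVec.map_mulVec_sub {ν : Measure (ι → ℝ)} {m : ι → ℝ} {v : Matrix ι ι ℝ}
    (h : IsGaussianVec ν m v) (A : Matrix κ ι ℝ) (c : ι → ℝ) :
    IsGaussianVec (ν.map fun x => A *ᵥ (x - c)) (A *ᵥ (m - c)) (A * v * Aᵀ) := by
  rw [isGaussianVec_iff_dotProduct] at h ⊢
  intro l
  have hfun : (l ⬝ᵥ ·) ∘ (fun x => A *ᵥ (x - c)) =
      (· - (l ᵥ* A) ⬝ᵥ c) ∘ ((l ᵥ* A) ⬝ᵥ ·) := by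
    funext x
    simp [dotProduct_mulVec, dotProduct_sub]
  have hvar : l ⬝ᵥ (A * v * Aᵀ) *ᵥ l = (l ᵥ* A) ⬝ᵥ v *ᵥ (l ᵥ* A) := by
    rw [← mulVec_mulVec, ← mulVec_mulVec, dotProduct_mulVec, ← vecMul_transpose Aᵀ,
      transpose_transpose, dotProduct_mulVec]
  rw [Measure.map_map (by fun_prop) (by fun_prop), hfun,
    ← Measure.map_map (by fun_prop) (by fun_prop), h, gaussianReal_map_sub_const, hvar,
    ← dotProduct_sub, ← dotProduct_mulVec]

lemma IsGaussianVec.ae_eq_of_cov_eq_zero {ν : Measure (ι → ℝ)} {m : ι → ℝ}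
    (h : IsGaussianVec ν m 0) : ∀ᵐ x ∂ν, x = m := by
  classical
  rw [isGaussianVec_iff_dotProduct] at h
  have hcoord : ∀ i, ∀ᵐ x ∂ν, x i = m i := fun i => by
    have hi := h (Pi.single i 1)
    simp only [single_dotProduct, one_mul, zero_mulVec, dotProduct_zero, Real.toNNReal_zero,
      gaussianReal_zero_var] at hi
    have hdirac : ∀ᵐ y ∂ν.map (fun x => x i), y = m i := by
      rw [hi]; exact (ae_dirac_iff (measurableSet_eq_fun measurable_id measurable_const)).2 rfl
    exact ae_of_ae_map (measurable_pi_apply i).aemeasurable hdirac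
  filter_upwards [ae_all_iff.2 hcoord] with x hx
  exact funext hx

lemma IsGaussianVec.ae_mulVec_sub_eq_zero {ν : Measure (ι → ℝ)} {m : ι → ℝ} {v : Matrix ι ι ℝ}
    (h : IsGaussianVec ν m v) {A : Matrix κ ι ℝ} (hA : A * v * Aᵀ = 0) :
    ∀ᵐ x ∂ν, A *ᵥ (x - m) = 0 := by
  have hdeg := h.map_mulVec_sub A m
  rw [hA, sub_self, mulVec_zero] at hdeg
  exact ae_of_ae_map (by fun_prop) hdeg.ae_eq_of_cov_eq_zero

end GaussianVec

section LeastSquares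

variable {R m k : Type*} [CommRing R] [Fintype m] [Fintype k] {ψ : Matrix m k R}

lemma conj_mul_transpose_eq {n : Type*} (A : Matrix n m R) (S : Matrix k k R) :
    A * (ψ * S * ψᵀ) * Aᵀ = (A * ψ) * S * (A * ψ)ᵀ := by
  simp only [transpose_mul, Matrix.mul_assoc]

variable [DecidableEq k]

lemma gram_inv_mul_transpose_mul_self (h : IsUnit (ψᵀ * ψ).det) :
    (ψᵀ * ψ)⁻¹ * ψᵀ * ψ = 1 := by
  rw [Matrix.mul_assoc, nonsing_inv_mul _ h]

lemma gram_inv_mul_transpose_conj (h : IsUnit (ψᵀ * ψ).det) (S : Matrix k k R) :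
    (ψᵀ * ψ)⁻¹ * ψᵀ * (ψ * S * ψᵀ) * ((ψᵀ * ψ)⁻¹ * ψᵀ)ᵀ = S := by
  rw [conj_mul_transpose_eq, gram_inv_mul_transpose_mul_self h, transpose_one, Matrix.mul_one,
    Matrix.one_mul]

lemma one_sub_projection_conj [DecidableEq m] (h : IsUnit (ψᵀ * ψ).det) (S : Matrix k k R) :
    (1 - ψ * ((ψᵀ * ψ)⁻¹ * ψᵀ)) * (ψ * S * ψᵀ) * (1 - ψ * ((ψᵀ * ψ)⁻¹ * ψᵀ))ᵀ = 0 := by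
  have hannih : (1 - ψ * ((ψᵀ * ψ)⁻¹ * ψᵀ)) * ψ = 0 := by
    rw [Matrix.sub_mul, Matrix.one_mul, Matrix.mul_assoc, gram_inv_mul_transpose_mul_self h,
      Matrix.mul_one, sub_self]
  rw [conj_mul_transpose_eq, hannih, Matrix.zero_mul, Matrix.zero_mul]

end LeastSquares

section PosSemidefBlocks

variable {m n : Type*} {v : Matrix (m ⊕ n) (m ⊕ n) ℝ}

lemma Matrix.IsHermitian.transpose_toBlocks₂₁ (hv : v.IsHermitian) :
    v.toBlocks₂₁ᵀ = v.toBlocks₁₂ := by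
  rw [← fromBlocks_toBlocks v, isHermitian_fromBlocks_iff] at hv
  simpa only [conjTranspose_eq_transpose_of_trivial] using hv.2.2.1

variable [Fintype m] [Fintype n]

lemma Matrix.PosSemidef.toBlocks₂₁_mulVec_eq_zero_s8 (hv : v.PosSemidef) {x : m → ℝ}
    (hx : v.toBlocks₁₁ *ᵥ x = 0) : v.toBlocks₂₁ *ᵥ x = 0 := by
  have hblock : v *ᵥ Sum.elim x 0 = Sum.elim (v.toBlocks₁₁ *ᵥ x) (v.toBlocks₂₁ *ᵥ x) := by
    conv_lhs => rw [← fromBlocks_toBlocks v]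
    simp [fromBlocks_mulVec]
  have hquad : star (Sum.elim x 0) ⬝ᵥ v *ᵥ Sum.elim x 0 = 0 := by
    simp [hblock, hx, sumElim_dotProduct_sumElim]
  have := congrArg (· ∘ Sum.inr) ((hv.dotProduct_mulVec_zero_iff _).1 hquad)
  simpa [hblock] using this

lemma Matrix.PosSemidef.toBlocks₂₁_mul_eq_zero_s8 [DecidableEq m] {k : Type*} [Fintype k]
    [DecidableEq k] (hv : v.PosSemidef) {B : Matrix m k ℝ} (hB : v.toBlocks₁₁ * B = 0) :
    v.toBlocks₂₁ * B = 0 :=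
  ext_of_mulVec_single fun i => by
    rw [← mulVec_mulVec, zero_mulVec]
    exact hv.toBlocks₂₁_mulVec_eq_zero_s8 (by rw [mulVec_mulVec, hB, zero_mulVec])

end PosSemidefBlocks

section GaussianLeastSquares

variable {ι κ Ω : Type*} [Fintype ι] [Fintype κ] [DecidableEq κ]
  [MeasurableSpace Ω] {μ : Measure Ω} {X : Ω → ι → ℝ} {m : ι → ℝ} {v : Matrix ι ι ℝ}
  {ψ : Matrix ι κ ℝ} {S : Matrix κ κ ℝ}

theorem IsGaussianVec.ae_sub_mulVec_leastSquares_eq_zero [DecidableEq ι]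
    (hlaw : IsGaussianVec (μ.map X) m v) (hX : Measurable X) (hfactor : ψ * S * ψᵀ = v)
    (hdet : IsUnit (ψᵀ * ψ).det) :
    ∀ᵐ ω ∂μ, X ω - m - ψ *ᵥ ((ψᵀ * ψ)⁻¹ *ᵥ (ψᵀ *ᵥ (X ω - m))) = 0 := by
  have hres : ∀ᵐ ω ∂μ, (1 - ψ * ((ψᵀ * ψ)⁻¹ * ψᵀ)) *ᵥ (X ω - m) = 0 :=
    ae_of_ae_map hX.aemeasurable <| hlaw.ae_mulVec_sub_eq_zero <| by
      rw [← hfactor]; exact one_sub_projection_conj hdet _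
  filter_upwards [hres] with ω hω
  rwa [sub_mulVec, one_mulVec, ← mulVec_mulVec, ← mulVec_mulVec] at hω

theorem IsGaussianVec.map_leastSquares (hlaw : IsGaussianVec (μ.map X) m v) (hX : Measurable X)
    (hfactor : ψ * S * ψᵀ = v) (hdet : IsUnit (ψᵀ * ψ).det) :
    IsGaussianVec (μ.map fun ω => (ψᵀ * ψ)⁻¹ *ᵥ (ψᵀ *ᵥ (X ω - m))) 0 S := by
  have hlawM := hlaw.map_mulVec_sub ((ψᵀ * ψ)⁻¹ * ψᵀ) m
  simp only [← mulVec_mulVec] at hlawM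
  rwa [Measure.map_map (by fun_prop) hX, sub_self, mulVec_zero, mulVec_zero, ← hfactor,
    gram_inv_mul_transpose_conj hdet] at hlawM

end GaussianLeastSquares

section InitialFactor

variable {m n l : Type*} [Fintype m] [Fintype l] [DecidableEq l] (u0 : Matrix m l ℝ) (d0 : l → ℝ)

/- `initialLoading u₀ d₀ vᵢ₁` is the paper's `ψᵢ₁ = vᵢ₁ u₀ λ₀^{-1/2}`, `initialFactor` is `ψ` and
`initialFactorCov` is `diag(I_l, φ)`. -/
noncomputable def initialLoading {k : Type*} (w : Matrix k m ℝ) : Matrix k l ℝ :=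
  w * u0 * diagonal fun i => (Real.sqrt (d0 i))⁻¹

noncomputable def initialFactor [DecidableEq n] (v : Matrix (m ⊕ n) (m ⊕ n) ℝ) :
    Matrix (m ⊕ n) (l ⊕ n) ℝ :=
  fromBlocks (initialLoading u0 d0 v.toBlocks₁₁) 0 (initialLoading u0 d0 v.toBlocks₂₁) 1

noncomputable def initialFactorCov [DecidableEq n] (v : Matrix (m ⊕ n) (m ⊕ n) ℝ) :
    Matrix (l ⊕ n) (l ⊕ n) ℝ :=
  fromBlocks 1 0 0
    (v.toBlocks₂₂ - initialLoading u0 d0 v.toBlocks₂₁ * (initialLoading u0 d0 v.toBlocks₂₁)ᵀ)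

variable {u0 d0} {v : Matrix (m ⊕ n) (m ⊕ n) ℝ}

lemma diagonal_inv_sqrt_mul_diagonal_sqrt (hd0 : ∀ i, 0 < d0 i) :
    (diagonal fun i => (√(d0 i))⁻¹) * diagonal (fun i => √(d0 i)) = 1 := by
  rw [diagonal_mul_diagonal, ← diagonal_one]
  exact congrArg diagonal (funext fun i => inv_mul_cancel₀ (Real.sqrt_pos.2 (hd0 i)).ne')

lemma diagonal_sqrt_mul_diagonal_sqrt (hd0 : ∀ i, 0 ≤ d0 i) :
    diagonal (fun i => √(d0 i)) * diagonal (fun i => √(d0 i)) = diagonal d0 := by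
  rw [diagonal_mul_diagonal]
  exact congrArg diagonal (funext fun i => Real.mul_self_sqrt (hd0 i))

lemma initialLoading_toBlocks₁₁ (hu0 : u0ᵀ * u0 = 1) (hv11 : v.toBlocks₁₁ = u0 * diagonal d0 * u0ᵀ) :
    initialLoading u0 d0 v.toBlocks₁₁ = u0 * diagonal fun i => √(d0 i) := by
  have hdiag : (diagonal d0 * diagonal fun i => (√(d0 i))⁻¹) = diagonal fun i => √(d0 i) := by
    rw [diagonal_mul_diagonal]
    exact congrArg diagonal (funext fun i => Real.div_sqrt)
  rw [initialLoading, hv11]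
  simp only [Matrix.mul_assoc]
  rw [← Matrix.mul_assoc u0ᵀ, hu0, Matrix.one_mul, hdiag]

variable [Fintype n]

lemma initialLoading_toBlocks₂₁_mul_transpose [DecidableEq m] (hv : v.PosSemidef) (hd0 : ∀ i, 0 < d0 i)
    (hu0 : u0ᵀ * u0 = 1) (hv11 : v.toBlocks₁₁ = u0 * diagonal d0 * u0ᵀ) :
    initialLoading u0 d0 v.toBlocks₂₁ * (initialLoading u0 d0 v.toBlocks₁₁)ᵀ = v.toBlocks₂₁ := by
  have hker : v.toBlocks₁₁ * (1 - u0 * u0ᵀ) = 0 := by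
    rw [Matrix.mul_sub, hv11]
    simp only [Matrix.mul_assoc]
    rw [← Matrix.mul_assoc u0ᵀ, hu0, Matrix.one_mul, Matrix.mul_one, sub_self]
  have hrange : v.toBlocks₂₁ * (u0 * u0ᵀ) = v.toBlocks₂₁ := by
    have := hv.toBlocks₂₁_mul_eq_zero_s8 hker
    rwa [Matrix.mul_sub, Matrix.mul_one, sub_eq_zero, eq_comm] at this
  rw [initialLoading_toBlocks₁₁ hu0 hv11, initialLoading, transpose_mul, diagonal_transpose]
  simp only [Matrix.mul_assoc]
  rw [← Matrix.mul_assoc (diagonal _), diagonal_inv_sqrt_mul_diagonal_sqrt hd0, Matrix.one_mul,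
    hrange]

variable [DecidableEq n]

theorem initialFactor_mul_initialFactorCov_mul_transpose [DecidableEq m] (hv : v.PosSemidef)
    (hd0 : ∀ i, 0 < d0 i) (hu0 : u0ᵀ * u0 = 1) (hv11 : v.toBlocks₁₁ = u0 * diagonal d0 * u0ᵀ) :
    initialFactor u0 d0 v * initialFactorCov u0 d0 v * (initialFactor u0 d0 v)ᵀ = v := by
  have h21 := initialLoading_toBlocks₂₁_mul_transpose hv hd0 hu0 hv11
  have h12 :
      initialLoading u0 d0 v.toBlocks₁₁ * (initialLoading u0 d0 v.toBlocks₂₁)ᵀ = v.toBlocks₁₂ := by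
    rw [← transpose_transpose (initialLoading u0 d0 v.toBlocks₁₁), ← transpose_mul, h21,
      hv.1.transpose_toBlocks₂₁]
  have h11 :
      initialLoading u0 d0 v.toBlocks₁₁ * (initialLoading u0 d0 v.toBlocks₁₁)ᵀ = v.toBlocks₁₁ := by
    rw [initialLoading_toBlocks₁₁ hu0 hv11, transpose_mul, diagonal_transpose, Matrix.mul_assoc,
      ← Matrix.mul_assoc (diagonal _), diagonal_sqrt_mul_diagonal_sqrt fun i => (hd0 i).le,
      hv11, Matrix.mul_assoc]
  rw [initialFactor, initialFactorCov, fromBlocks_transpose, fromBlocks_multiply,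
    fromBlocks_multiply]
  simp only [Matrix.mul_zero, Matrix.zero_mul, Matrix.mul_one, Matrix.one_mul, transpose_zero,
    transpose_one, add_zero, zero_add, h11, h12, h21, add_sub_cancel, fromBlocks_toBlocks]

theorem isUnit_det_gram_initialFactor (hd0 : ∀ i, 0 < d0 i) (hu0 : u0ᵀ * u0 = 1)
    (hv11 : v.toBlocks₁₁ = u0 * diagonal d0 * u0ᵀ) :
    IsUnit ((initialFactor u0 d0 v)ᵀ * initialFactor u0 d0 v).det := by
  have hgram11 :
      (initialLoading u0 d0 v.toBlocks₁₁)ᵀ * initialLoading u0 d0 v.toBlocks₁₁ = diagonal d0 := by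
    rw [initialLoading_toBlocks₁₁ hu0 hv11, transpose_mul, diagonal_transpose, Matrix.mul_assoc,
      ← Matrix.mul_assoc u0ᵀ, hu0, Matrix.one_mul,
      diagonal_sqrt_mul_diagonal_sqrt fun i => (hd0 i).le]
  rw [initialFactor, fromBlocks_transpose, fromBlocks_multiply]
  simp only [Matrix.mul_zero, Matrix.zero_mul, Matrix.mul_one, Matrix.one_mul, transpose_zero,
    transpose_one, zero_add]
  rw [det_fromBlocks_one₂₂, add_sub_cancel_right, hgram11, det_diagonal]
  exact (Finset.prod_pos fun i _ => hd0 i).ne'.isUnit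

end InitialFactor

theorem gaussian_initial_factorization_general
    {n1 n2 l : ℕ}
    {Ω : Type*} [MeasurableSpace Ω] (μ : Measure Ω)
    (X : Ω → (Fin n1 ⊕ Fin n2 → ℝ)) (hX : Measurable X)
    (μv : Fin n1 ⊕ Fin n2 → ℝ) (v : Matrix (Fin n1 ⊕ Fin n2) (Fin n1 ⊕ Fin n2) ℝ)
    (hv : v.PosSemidef) (hlaw : IsGaussianVec (μ.map X) μv v)
    (u0 : Matrix (Fin n1) (Fin l) ℝ) (d0 : Fin l → ℝ)
    (hd0 : ∀ i, 0 < d0 i) (hu0 : u0ᵀ * u0 = 1)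
    (hv11 : v.toBlocks₁₁ = u0 * Matrix.diagonal d0 * u0ᵀ) :
    letI lih : Matrix (Fin l) (Fin l) ℝ := Matrix.diagonal fun i => (Real.sqrt (d0 i))⁻¹
    letI ψ11 := v.toBlocks₁₁ * u0 * lih
    letI ψ21 := v.toBlocks₂₁ * u0 * lih
    letI φ := v.toBlocks₂₂ - ψ21 * ψ21ᵀ
    letI ψ : Matrix (Fin n1 ⊕ Fin n2) (Fin l ⊕ Fin n2) ℝ := Matrix.fromBlocks ψ11 0 ψ21 1
    letI Ξ : Ω → (Fin l ⊕ Fin n2 → ℝ) :=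
      fun ω => (ψᵀ * ψ)⁻¹ *ᵥ (ψᵀ *ᵥ (X ω - μv))
    (∫ ω, (∑ i, (X ω i - μv i - (ψ *ᵥ Ξ ω) i) ^ 2) ∂μ) = 0 ∧
      IsGaussianVec (μ.map Ξ) 0 (Matrix.fromBlocks 1 0 0 φ) := by
  have hfactor := initialFactor_mul_initialFactorCov_mul_transpose hv hd0 hu0 hv11
  have hdet := isUnit_det_gram_initialFactor (v := v) hd0 hu0 hv11
  refine ⟨integral_eq_zero_of_ae ?_, hlaw.map_leastSquares hX hfactor hdet⟩
  filter_upwards [hlaw.ae_sub_mulVec_leastSquares_eq_zero hX hfactor hdet] with ω hω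
  exact Finset.sum_eq_zero fun i _ => (pow_eq_zero_iff two_ne_zero).2 (congrFun hω i)

/-- Factorization of the initial condition: with `v₁₁ = u₀ λ₀ u₀ᵀ` the reduced
eigen-decomposition (rank `l`), `ψᵢ₁ = vᵢ₁ u₀ λ₀^{-1/2}`, `φ = v₂₂ − ψ₂₁ψ₂₁ᵀ`,
`ψ = [[ψ₁₁,0],[ψ₂₁,I]]`, if `X ∼ N(μ, v)` and `Ξ = (ψᵀψ)⁻¹ψᵀ(X−μ)` then
`E‖X − μ − ψΞ‖² = 0` and `Ξ ∼ N(0, diag(I_l, φ))`. -/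
theorem gaussian_initial_factorization
    {n1 n2 l : ℕ} (hl : 0 < l)
    {Ω : Type*} [MeasurableSpace Ω] (μ : Measure Ω) [IsProbabilityMeasure μ]
    (X : Ω → (Fin n1 ⊕ Fin n2 → ℝ)) (hX : Measurable X)
    (μv : Fin n1 ⊕ Fin n2 → ℝ) (v : Matrix (Fin n1 ⊕ Fin n2) (Fin n1 ⊕ Fin n2) ℝ)
    (hv : v.PosSemidef) (hlaw : IsGaussianVec (μ.map X) μv v)
    (u0 : Matrix (Fin n1) (Fin l) ℝ) (d0 : Fin l → ℝ)
    (hd0 : ∀ i, 0 < d0 i) (hu0 : u0ᵀ * u0 = 1)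
    (hv11 : v.toBlocks₁₁ = u0 * Matrix.diagonal d0 * u0ᵀ)
    (hrank : (v.toBlocks₁₁).rank = l) :
    letI lih : Matrix (Fin l) (Fin l) ℝ := Matrix.diagonal fun i => (Real.sqrt (d0 i))⁻¹
    letI ψ11 := v.toBlocks₁₁ * u0 * lih
    letI ψ21 := v.toBlocks₂₁ * u0 * lih
    letI φ := v.toBlocks₂₂ - ψ21 * ψ21ᵀ
    letI ψ : Matrix (Fin n1 ⊕ Fin n2) (Fin l ⊕ Fin n2) ℝ := Matrix.fromBlocks ψ11 0 ψ21 1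
    letI Ξ : Ω → (Fin l ⊕ Fin n2 → ℝ) :=
      fun ω => (ψᵀ * ψ)⁻¹ *ᵥ (ψᵀ *ᵥ (X ω - μv))
    (∫ ω, (∑ i, (X ω i - μv i - (ψ *ᵥ Ξ ω) i) ^ 2) ∂μ) = 0 ∧
      IsGaussianVec (μ.map Ξ) 0 (Matrix.fromBlocks 1 0 0 φ) :=
  gaussian_initial_factorization_general μ X hX μv v hv hlaw u0 d0 hd0 hu0 hv11
end
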